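/- (Binary-outcome rank condition for Theorem 2.) Suppose 𝒴 = {0,1}. Fix x ∈ 𝒳 and assume Assumption 2 holds, that P(X=x, T=t, R^X=1, R^T=1) > 0 for all t ∈ 𝒯, and that P(R^Y=1 | X=x, Y=y, R^X=1, R^T=1) > 0 for y ∈ {0,1}. Then the |𝒯| × 2 matrix Θ_x with entries Θ_x(t,y) = P(Y=y, R^Y=1 | T=t, X=x, R^X=1, R^T=1) has rank 2 if and only if there exist t, t' ∈ 𝒯 with P(Y=1 | X=x, T=t) ≠ P(Y=1 | X=x, T=t'), i.e., if and only if Y and T are conditionally dependent given X=x. -/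

import Mathlib

open scoped Classical
noncomputable section

namespace CATEMNAR

variable {Ω : Type*} [Fintype Ω]

/-- Probability of the event `E` under the pmf `p` on the finite space `Ω`. -/
def Pr (p : Ω → ℝ) (E : Ω → Prop) : ℝ := ∑ ω, if E ω then p ω else 0

/-- Conditional probability `P(E | C)` (junk value `0` when `P(C) = 0`). -/
def CPr (p : Ω → ℝ) (E C : Ω → Prop) : ℝ := Pr p (fun ω => E ω ∧ C ω) / Pr p C

/-- Conditional independence `A ⫫ B | C` under `p`: for all values `a, b, c` with
`P(C = c) > 0`, `P(A = a, B = b | C = c) = P(A = a | C = c) * P(B = b | C = c)`. -/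
def CondIndep {α β γ : Type*} (p : Ω → ℝ) (A : Ω → α) (B : Ω → β) (C : Ω → γ) : Prop :=
  ∀ (a : α) (b : β) (c : γ), 0 < Pr p (fun ω => C ω = c) →
    CPr p (fun ω => A ω = a ∧ B ω = b) (fun ω => C ω = c) =
      CPr p (fun ω => A ω = a) (fun ω => C ω = c) *
        CPr p (fun ω => B ω = b) (fun ω => C ω = c)

theorem Pr_congr {p : Ω → ℝ} {E F : Ω → Prop} (h : ∀ ω, E ω ↔ F ω) : Pr p E = Pr p F :=
  Finset.sum_congr rfl fun ω _ => by rw [if_congr (h ω) rfl rfl]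

theorem Pr_nonneg {p : Ω → ℝ} (hp0 : ∀ ω, 0 ≤ p ω) (E : Ω → Prop) : 0 ≤ Pr p E :=
  Finset.sum_nonneg fun ω _ => by by_cases h : E ω <;> simp [h, hp0 ω]

theorem Pr_mono {p : Ω → ℝ} (hp0 : ∀ ω, 0 ≤ p ω) {E F : Ω → Prop} (h : ∀ ω, E ω → F ω) :
    Pr p E ≤ Pr p F :=
  Finset.sum_le_sum fun ω _ => by
    by_cases hE : E ω
    · simp [hE, h ω hE]
    · simp only [hE, if_false]
      by_cases hF : F ω <;> simp [hF, hp0 ω]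

theorem CPr_congr {p : Ω → ℝ} {E F C D : Ω → Prop} (h1 : ∀ ω, E ω ↔ F ω)
    (h2 : ∀ ω, C ω ↔ D ω) : CPr p E C = CPr p F D := by
  unfold CPr
  rw [Pr_congr h2, Pr_congr (fun ω => and_congr (h1 ω) (h2 ω))]

theorem CondIndep.symm {α β γ : Type*} {p : Ω → ℝ} {A : Ω → α} {B : Ω → β} {C : Ω → γ}
    (h : CondIndep p A B C) : CondIndep p B A C := by
  intro b a c hC
  have key := h a b c hC
  rw [CPr_congr (fun ω => (show (B ω = b ∧ A ω = a) ↔ (A ω = a ∧ B ω = b) from and_comm))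
    (fun _ => Iff.rfl), key, mul_comm]

/-- If `A ⫫ B | C` then `P(B | A, C) = P(B | C)` whenever `P(A, C) > 0`. -/
theorem CondIndep.cpr_eq {α β γ : Type*} {p : Ω → ℝ} (hp0 : ∀ ω, 0 ≤ p ω)
    {A : Ω → α} {B : Ω → β} {C : Ω → γ}
    (h : CondIndep p A B C) (a : α) (b : β) (c : γ)
    (hAC : 0 < Pr p (fun ω => A ω = a ∧ C ω = c)) :
    CPr p (fun ω => B ω = b) (fun ω => A ω = a ∧ C ω = c) =
      CPr p (fun ω => B ω = b) (fun ω => C ω = c) := by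
  have hC : 0 < Pr p (fun ω => C ω = c) :=
    lt_of_lt_of_le hAC (Pr_mono hp0 fun ω hω => hω.2)
  have key := h a b c hC
  have hACne : Pr p (fun ω => A ω = a ∧ C ω = c) ≠ 0 := ne_of_gt hAC
  have hCne : Pr p (fun ω => C ω = c) ≠ 0 := ne_of_gt hC
  unfold CPr at key ⊢
  rw [Pr_congr (show ∀ ω, ((A ω = a ∧ B ω = b) ∧ C ω = c) ↔
      (B ω = b ∧ A ω = a ∧ C ω = c) from fun ω => by tauto)] at key
  field_simp at key
  have key2 : Pr p (fun ω => B ω = b ∧ A ω = a ∧ C ω = c) * Pr p (fun ω => C ω = c)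
      = Pr p (fun ω => A ω = a ∧ C ω = c) * Pr p (fun ω => B ω = b ∧ C ω = c) :=
    (by linear_combination key)
  rw [div_eq_div_iff hACne hCne]
  beta_reduce
  linear_combination key2

/-- Chain rule. -/
theorem CPr_chain {p : Ω → ℝ} {E F C : Ω → Prop}
    (hne : Pr p (fun ω => F ω ∧ C ω) ≠ 0) :
    CPr p (fun ω => E ω ∧ F ω) C =
      CPr p E (fun ω => F ω ∧ C ω) * CPr p F C := by
  unfold CPr
  rw [Pr_congr (show ∀ ω, ((E ω ∧ F ω) ∧ C ω) ↔ (E ω ∧ F ω ∧ C ω) from fun ω => by tauto)]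
  by_cases hC : Pr p C = 0
  · rw [hC, div_zero, div_zero, mul_zero]
  · field_simp

theorem Pr_split_bool {p : Ω → ℝ} (Y : Ω → Bool) (C : Ω → Prop) :
    Pr p (fun ω => Y ω = false ∧ C ω) + Pr p (fun ω => Y ω = true ∧ C ω) = Pr p C := by
  unfold Pr
  rw [← Finset.sum_add_distrib]
  refine Finset.sum_congr rfl fun ω _ => ?_
  cases hY : Y ω <;> by_cases hC : C ω <;> simp [hY, hC]

/-- Binary-outcome rank condition for Theorem 2: with `𝒴 = {0,1}` (here `Bool`), the
`|𝒯| × 2` matrix `Θ_x` has rank 2 if and only if `Y` and `T` are conditionally dependent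
given `X = x`. -/
theorem stmt_8 {𝒳 𝒯 : Type*} [Fintype 𝒳] [Fintype 𝒯] [DecidableEq 𝒯]
    (p : Ω → ℝ) (hp0 : ∀ ω, 0 ≤ p ω) (hp1 : ∑ ω, p ω = 1)
    (X : Ω → 𝒳) (T : Ω → 𝒯) (Y : Ω → Bool) (RX RT RY : Ω → Bool)
    (hRX : CondIndep p RX Y (fun ω => (X ω, T ω)))
    (hRT : CondIndep p RT Y (fun ω => (X ω, T ω, RX ω)))
    (hRY : CondIndep p RY T (fun ω => (X ω, Y ω, RX ω, RT ω)))
    (x : 𝒳)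
    (hpos : ∀ t : 𝒯,
      0 < Pr p (fun ω => X ω = x ∧ T ω = t ∧ RX ω = true ∧ RT ω = true))
    (hres : ∀ y : Bool,
      0 < CPr p (fun ω => RY ω = true)
        (fun ω => X ω = x ∧ Y ω = y ∧ RX ω = true ∧ RT ω = true)) :
    (Matrix.of fun (t : 𝒯) (y : Bool) =>
        CPr p (fun ω => Y ω = y ∧ RY ω = true)
          (fun ω => T ω = t ∧ X ω = x ∧ RX ω = true ∧ RT ω = true)).rank = 2 ↔
      ∃ t t' : 𝒯,
        CPr p (fun ω => Y ω = true) (fun ω => X ω = x ∧ T ω = t) ≠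
          CPr p (fun ω => Y ω = true) (fun ω => X ω = x ∧ T ω = t') := by
  -- positivity of the conditioning events
  have hCt : ∀ t : 𝒯, 0 < Pr p (fun ω => T ω = t ∧ X ω = x ∧ RX ω = true ∧ RT ω = true) :=
    fun t => lt_of_lt_of_eq (hpos t) (Pr_congr fun ω => by tauto)
  have hXT : ∀ t : 𝒯, 0 < Pr p (fun ω => X ω = x ∧ T ω = t) :=
    fun t => lt_of_lt_of_le (hCt t) (Pr_mono hp0 fun ω hω => ⟨hω.2.1, hω.1⟩)
  -- Step B : P(Y = y | T = t, X = x, RX, RT) = P(Y = y | X = x, T = t)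
  have hB : ∀ (t : 𝒯) (y : Bool),
      CPr p (fun ω => Y ω = y) (fun ω => T ω = t ∧ X ω = x ∧ RX ω = true ∧ RT ω = true) =
      CPr p (fun ω => Y ω = y) (fun ω => X ω = x ∧ T ω = t) := by
    intro t y
    have e3 : ∀ ω : Ω, (T ω = t ∧ X ω = x ∧ RX ω = true ∧ RT ω = true) ↔
        (RT ω = true ∧ (X ω, T ω, RX ω) = (x, t, true)) := by
      intro ω; simp only [Prod.mk.injEq]; tauto
    have h1 : CPr p (fun ω => Y ω = y)
          (fun ω => T ω = t ∧ X ω = x ∧ RX ω = true ∧ RT ω = true)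
        = CPr p (fun ω => Y ω = y) (fun ω => (X ω, T ω, RX ω) = (x, t, true)) := by
      rw [CPr_congr (fun _ => Iff.rfl) e3]
      exact hRT.cpr_eq hp0 true y (x, t, true) (lt_of_lt_of_eq (hCt t) (Pr_congr e3))
    have e4 : ∀ ω : Ω, ((X ω, T ω, RX ω) = (x, t, true)) ↔
        (RX ω = true ∧ (X ω, T ω) = (x, t)) := by
      intro ω; simp only [Prod.mk.injEq]; tauto
    have h2 : CPr p (fun ω => Y ω = y) (fun ω => (X ω, T ω, RX ω) = (x, t, true))
        = CPr p (fun ω => Y ω = y) (fun ω => (X ω, T ω) = (x, t)) := by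
      rw [CPr_congr (fun _ => Iff.rfl) e4]
      refine hRX.cpr_eq hp0 true y (x, t) ?_
      refine lt_of_lt_of_le (hCt t) (Pr_mono hp0 fun ω hω => ?_)
      exact ⟨hω.2.2.1, by simp [Prod.mk.injEq, hω.1, hω.2.1]⟩
    rw [h1, h2, CPr_congr (fun (_ : Ω) => Iff.rfl)
      (fun ω => (show ((X ω, T ω) = (x, t)) ↔ (X ω = x ∧ T ω = t) by
        simp only [Prod.mk.injEq]))]
  -- Step A : Θ t y = P(Y = y | T,X,RX,RT) * a y
  have hA : ∀ (t : 𝒯) (y : Bool),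
      CPr p (fun ω => Y ω = y ∧ RY ω = true)
          (fun ω => T ω = t ∧ X ω = x ∧ RX ω = true ∧ RT ω = true)
        = CPr p (fun ω => Y ω = y) (fun ω => T ω = t ∧ X ω = x ∧ RX ω = true ∧ RT ω = true) *
          CPr p (fun ω => RY ω = true)
            (fun ω => X ω = x ∧ Y ω = y ∧ RX ω = true ∧ RT ω = true) := by
    intro t y
    by_cases hy : Pr p (fun ω => Y ω = y ∧ T ω = t ∧ X ω = x ∧ RX ω = true ∧ RT ω = true) = 0
    · have hnum : Pr p (fun ω => (Y ω = y ∧ RY ω = true) ∧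
          T ω = t ∧ X ω = x ∧ RX ω = true ∧ RT ω = true) = 0 :=
        le_antisymm (le_of_le_of_eq (Pr_mono hp0 fun ω hω => ⟨hω.1.1, hω.2⟩) hy)
          (Pr_nonneg hp0 _)
      unfold CPr
      rw [hnum, hy, zero_div, zero_mul]
    · rw [CPr_congr (fun ω => (show (Y ω = y ∧ RY ω = true) ↔ (RY ω = true ∧ Y ω = y) from
        and_comm)) (fun (_ : Ω) => Iff.rfl), CPr_chain hy, mul_comm]
      congr 1
      have e6 : ∀ ω : Ω, (Y ω = y ∧ T ω = t ∧ X ω = x ∧ RX ω = true ∧ RT ω = true) ↔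
          (T ω = t ∧ (X ω, Y ω, RX ω, RT ω) = (x, y, true, true)) := by
        intro ω; simp only [Prod.mk.injEq]; tauto
      rw [CPr_congr (fun (_ : Ω) => Iff.rfl) e6]
      rw [hRY.symm.cpr_eq hp0 t true (x, y, true, true)
        (lt_of_lt_of_eq (lt_of_le_of_ne (Pr_nonneg hp0 _) (Ne.symm hy)) (Pr_congr e6))]
      exact CPr_congr (fun (_ : Ω) => Iff.rfl)
        (fun ω => by simp only [Prod.mk.injEq])
  -- complementarity
  have hcompl : ∀ t : 𝒯, CPr p (fun ω => Y ω = false) (fun ω => X ω = x ∧ T ω = t)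
      = 1 - CPr p (fun ω => Y ω = true) (fun ω => X ω = x ∧ T ω = t) := by
    intro t
    have h := Pr_split_bool (p := p) Y (fun ω => X ω = x ∧ T ω = t)
    unfold CPr
    rw [eq_sub_iff_add_eq, ← add_div, h, div_self (ne_of_gt (hXT t))]
  -- the matrix entries
  set M : Matrix 𝒯 Bool ℝ := Matrix.of fun (t : 𝒯) (y : Bool) =>
      CPr p (fun ω => Y ω = y ∧ RY ω = true)
        (fun ω => T ω = t ∧ X ω = x ∧ RX ω = true ∧ RT ω = true) with hMdef
  have hM : ∀ (t : 𝒯) (y : Bool),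
      M t y
      = (if y = true then CPr p (fun ω => Y ω = true) (fun ω => X ω = x ∧ T ω = t)
          else 1 - CPr p (fun ω => Y ω = true) (fun ω => X ω = x ∧ T ω = t)) *
        CPr p (fun ω => RY ω = true)
          (fun ω => X ω = x ∧ Y ω = y ∧ RX ω = true ∧ RT ω = true) := by
    intro t y
    rw [hMdef, Matrix.of_apply, hA t y, hB t y]
    cases y
    · rw [hcompl t]; simp
    · simp
  rw [Matrix.rank_eq_finrank_span_cols]
  constructor
  · intro h2
    by_contra hcon
    push_neg at hcon
    have hmem : ∀ yb : Bool, M.transpose yb ∈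
        Submodule.span ℝ ({fun _ => (1 : ℝ)} : Set (𝒯 → ℝ)) := by
      intro yb
      rcases isEmpty_or_nonempty 𝒯 with hT | hT
      · have hz : M.transpose yb = 0 := funext fun t => hT.elim t
        rw [hz]; exact zero_mem _
      · obtain ⟨t₀⟩ := hT
        have hz : M.transpose yb = (M t₀ yb) • (fun _ => (1 : ℝ)) := by
          funext t
          simp only [Matrix.transpose_apply, Pi.smul_apply, smul_eq_mul, mul_one]
          rw [hM t yb, hM t₀ yb, hcon t t₀]
        rw [hz]
        exact Submodule.smul_mem _ _ (Submodule.subset_span rfl)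
    have hle : Submodule.span ℝ (Set.range M.transpose) ≤
        Submodule.span ℝ ({fun _ => (1 : ℝ)} : Set (𝒯 → ℝ)) :=
      Submodule.span_le.mpr (Set.range_subset_iff.mpr hmem)
    have hfr : Module.finrank ℝ (Submodule.span ℝ (Set.range M.transpose)) ≤ 1 := by
      refine le_trans (Submodule.finrank_mono hle) ?_
      have := finrank_span_le_card (R := ℝ) ({fun _ => (1 : ℝ)} : Set (𝒯 → ℝ))
      simpa using this
    have h2' : Module.finrank ℝ (Submodule.span ℝ (Set.range M.transpose)) = 2 := h2
    omega
  · rintro ⟨t, t', hne⟩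
    have hli : LinearIndependent ℝ M.col := by
      rw [Fintype.linearIndependent_iff]
      intro g hg
      have E : ∀ s : 𝒯,
          g false * ((1 - CPr p (fun ω => Y ω = true) (fun ω => X ω = x ∧ T ω = s)) *
            CPr p (fun ω => RY ω = true)
              (fun ω => X ω = x ∧ Y ω = false ∧ RX ω = true ∧ RT ω = true)) +
          g true * (CPr p (fun ω => Y ω = true) (fun ω => X ω = x ∧ T ω = s) *
            CPr p (fun ω => RY ω = true)
              (fun ω => X ω = x ∧ Y ω = true ∧ RX ω = true ∧ RT ω = true)) = 0 := by
        intro s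
        have hgs := congr_fun hg s
        simp only [Fintype.sum_bool, Pi.add_apply, Pi.smul_apply, Matrix.col_apply,
          smul_eq_mul, Pi.zero_apply] at hgs
        rw [hM s false, hM s true] at hgs
        simp only [if_true, if_false, Bool.false_eq_true, reduceIte] at hgs
        linarith [hgs]
      have h1 := E t
      have h2 := E t'
      have key : (g true * CPr p (fun ω => RY ω = true)
            (fun ω => X ω = x ∧ Y ω = true ∧ RX ω = true ∧ RT ω = true)
          - g false * CPr p (fun ω => RY ω = true)
            (fun ω => X ω = x ∧ Y ω = false ∧ RX ω = true ∧ RT ω = true)) *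
          (CPr p (fun ω => Y ω = true) (fun ω => X ω = x ∧ T ω = t)
            - CPr p (fun ω => Y ω = true) (fun ω => X ω = x ∧ T ω = t')) = 0 := by
        linear_combination h1 - h2
      rcases mul_eq_zero.mp key with hk | hk
      · have hgf : g false * CPr p (fun ω => RY ω = true)
            (fun ω => X ω = x ∧ Y ω = false ∧ RX ω = true ∧ RT ω = true) = 0 := by
          linear_combination h1 - (CPr p (fun ω => Y ω = true)
            (fun ω => X ω = x ∧ T ω = t)) * hk
        have hf0 : g false = 0 := by
          rcases mul_eq_zero.mp hgf with h | h
          · exact h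
          · exact absurd h (ne_of_gt (hres false))
        have hgt : g true * CPr p (fun ω => RY ω = true)
            (fun ω => X ω = x ∧ Y ω = true ∧ RX ω = true ∧ RT ω = true) = 0 := by
          linear_combination hk + hgf
        have ht0 : g true = 0 := by
          rcases mul_eq_zero.mp hgt with h | h
          · exact h
          · exact absurd h (ne_of_gt (hres true))
        intro i; cases i
        · exact hf0
        · exact ht0
      · exact absurd (sub_eq_zero.mp hk) hne
    rw [finrank_span_eq_card hli]
    simp

end CATEMNAR
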